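/- Let σ:ℝ³→[0,∞) be continuous, spherically symmetric, with compact support, finite mass, satisfying the polytropic Euler–Lagrange relation A'(σ(x)) = [V_σ(x)+λ]₊ on all of ℝ³ with λ < 0, where A(s) = (K/(γ−1))s^γ, γ > 4/3. Then the energy E₀(σ) = ∫A(σ) − (1/2)G(σ,σ) satisfies E₀(σ) = (4−3γ)∫A(σ), and G(σ,σ) = (6γ−6)∫A(σ). -/

import Mathlib

/-!
Newton's theorem turns the potential of the radial density `σ x = f ‖x‖` into the radial function
`v r = 4π ∫ s² f s / max r s = 4π (m r / r + w r)` (`radialPotential`), where `m r = ∫₀ʳ s² f`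
(`innerMass`) and `w r = ∫ᵣ^∞ s f` (`outerPotential`), so that `v' = -4π m / r²`. By the
Euler–Lagrange relation the pressure `P = K f^γ` is a power `[u]₊^q`, `q = γ/(γ-1) > 1`, of an
affine function `u` of `v`; since `[u]₊^q` is `C¹`, also across the free boundary, `P' = f v'`.
Integrating `(r³ P)' = 3 r² P - 4π r m f` over `(0, ∞)` gives the Pohozaev identity
`3 ∫ r² P = 4π ∫ r m f`, and integrating `(m w)'` gives `G(σ, σ) = 32π² ∫ r m f`. Hence
`G(σ, σ) = 6 ∫ P = (6γ - 6) ∫ A(σ)`.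
-/

open MeasureTheory Set Filter Topology Metric

open Real ENNReal

theorem lintegral_comp_sq_add_sq (h : ℝ → ℝ≥0∞) (hh : Measurable h) :
    ∫⁻ v : ℝ × ℝ, h (v.1 ^ 2 + v.2 ^ 2) =
      ENNReal.ofReal (2 * π) * ∫⁻ ρ in Ioi 0, ENNReal.ofReal ρ * h (ρ ^ 2) := by
  rw [← lintegral_comp_polarCoord_symm, polarCoord_target, Measure.volume_eq_prod,
    ← Measure.prod_restrict, lintegral_prod _ (by fun_prop),
    ← lintegral_const_mul' _ _ ofReal_ne_top]
  refine setLIntegral_congr_fun measurableSet_Ioi fun ρ _ => ?_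
  have hsq : ∀ θ, (ρ * cos θ) ^ 2 + (ρ * sin θ) ^ 2 = ρ ^ 2 := fun θ => by
    linear_combination ρ ^ 2 * sin_sq_add_cos_sq θ
  simp only [polarCoord_symm_apply, hsq, smul_eq_mul, setLIntegral_const, Real.volume_Ioo]
  rw [show π - -π = 2 * π by ring, mul_comm]

theorem sin_pos_iff_of_mem_Ioo {θ : ℝ} (hθ : θ ∈ Ioo (-π) π) : 0 < sin θ ↔ θ ∈ Ioo 0 π := by
  refine ⟨fun h => ⟨?_, hθ.2⟩, fun h => sin_pos_of_pos_of_lt_pi h.1 h.2⟩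
  by_contra! h0
  linarith [sin_nonpos_of_nonpos_of_neg_pi_le h0 hθ.1.le]

theorem setLIntegral_upperHalfPlane_eq (F : ℝ × ℝ → ℝ≥0∞) (hF : Measurable F) :
    ∫⁻ p in univ ×ˢ Ioi 0, F p =
      ∫⁻ s in Ioi 0, ∫⁻ θ in Ioo 0 π, ENNReal.ofReal s * F (s * cos θ, s * sin θ) := by
  have hS : MeasurableSet (Ioi (0 : ℝ) ×ˢ Ioo 0 π) := measurableSet_Ioi.prod measurableSet_Ioo
  have hmem : ∀ p ∈ polarCoord.target,
      polarCoord.symm p ∈ univ ×ˢ Ioi (0 : ℝ) ↔ p ∈ Ioi (0 : ℝ) ×ˢ Ioo 0 π := fun p hp => by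
    rw [polarCoord_target] at hp
    simp only [polarCoord_symm_apply, mem_prod, mem_univ, true_and, mem_Ioi, hp.1]
    rw [mul_pos_iff_of_pos_left hp.1, sin_pos_iff_of_mem_Ioo hp.2]
  rw [← lintegral_indicator (MeasurableSet.univ.prod measurableSet_Ioi),
    ← lintegral_comp_polarCoord_symm]
  calc ∫⁻ p in polarCoord.target, ENNReal.ofReal p.1 •
        (univ ×ˢ Ioi 0).indicator F (polarCoord.symm p)
      = ∫⁻ p in polarCoord.target, (Ioi (0 : ℝ) ×ˢ Ioo 0 π).indicator
          (fun p => ENNReal.ofReal p.1 * F (polarCoord.symm p)) p := by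
        refine setLIntegral_congr_fun polarCoord.open_target.measurableSet fun p hp => ?_
        by_cases h : p ∈ Ioi (0 : ℝ) ×ˢ Ioo 0 π
        · rw [indicator_of_mem h, indicator_of_mem ((hmem p hp).2 h), smul_eq_mul]
        · rw [indicator_of_notMem h, indicator_of_notMem (mt (hmem p hp).1 h), smul_zero]
    _ = ∫⁻ p in Ioi (0 : ℝ) ×ˢ Ioo 0 π, ENNReal.ofReal p.1 * F (polarCoord.symm p) := by
        rw [lintegral_indicator hS, Measure.restrict_restrict hS, inter_eq_left.2]
        rw [polarCoord_target]
        exact prod_mono_right fun θ hθ => ⟨by linarith [hθ.1, pi_pos], hθ.2⟩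
    _ = _ := by
        rw [Measure.volume_eq_prod, ← Measure.prod_restrict, lintegral_prod _ (by fun_prop)]
        simp only [polarCoord_symm_apply]

theorem measurePreserving_toLp_vecCons :
    MeasurePreserving (fun p : ℝ × (ℝ × ℝ) => !₂[p.1, p.2.1, p.2.2]) := by
  have h := (PiLp.volume_preserving_toLp (Fin 3)).comp
    ((volume_preserving_piFinSuccAbove (fun _ : Fin 3 => ℝ) 0).symm.comp
      ((MeasurePreserving.id volume).prod (volume_preserving_finTwoArrow ℝ).symm))
  rw [← Measure.volume_eq_prod] at h
  convert h using 1
  ext p i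
  fin_cases i <;> rfl

theorem norm_toLp_vecCons (t a c : ℝ) : ‖!₂[t, a, c]‖ = √(t ^ 2 + (a ^ 2 + c ^ 2)) := by
  simp [EuclideanSpace.norm_eq, Fin.sum_univ_three, add_assoc]

theorem lintegral_euclideanSpace_fin_three (g : ℝ → ℝ → ℝ≥0∞)
    (hg : Measurable (Function.uncurry g)) :
    ∫⁻ y : EuclideanSpace ℝ (Fin 3), g ‖y‖ (y 0) = ENNReal.ofReal (2 * π) *
      ∫⁻ s in Ioi 0, ∫⁻ θ in Ioo 0 π, ENNReal.ofReal (s ^ 2 * sin θ) * g s (s * cos θ) := by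
  have hg' : ∀ {α : Type} [MeasurableSpace α] {u v : α → ℝ}, Measurable u → Measurable v →
      Measurable fun a => g (u a) (v a) := fun hu hv => hg.comp (hu.prodMk hv)
  -- `y = (t, ρ cos φ, ρ sin φ)`, then `(t, ρ) = (s cos θ, s sin θ)` in the upper half-plane.
  rw [← measurePreserving_toLp_vecCons.lintegral_comp (hg' measurable_norm (by fun_prop))]
  simp only [norm_toLp_vecCons]
  rw [Measure.volume_eq_prod, lintegral_prod _ (hg' (by fun_prop) (by fun_prop)).aemeasurable]
  simp only [Matrix.cons_val_zero]
  rw [lintegral_congr fun t => lintegral_comp_sq_add_sq (fun q => g √(t ^ 2 + q) t)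
    (hg' (by fun_prop) measurable_const), lintegral_const_mul' _ _ ofReal_ne_top]
  congr 1
  have hF : Measurable fun p : ℝ × ℝ => ENNReal.ofReal p.2 * g √(p.1 ^ 2 + p.2 ^ 2) p.1 :=
    (measurable_snd.ennreal_ofReal).mul (hg' (by fun_prop) measurable_fst)
  calc ∫⁻ t, ∫⁻ ρ in Ioi 0, ENNReal.ofReal ρ * g √(t ^ 2 + ρ ^ 2) t
      = ∫⁻ p in univ ×ˢ Ioi 0, ENNReal.ofReal p.2 * g √(p.1 ^ 2 + p.2 ^ 2) p.1 := by
        rw [Measure.volume_eq_prod, ← Measure.prod_restrict, lintegral_prod _ hF.aemeasurable,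
          Measure.restrict_univ]
    _ = _ := by
        rw [setLIntegral_upperHalfPlane_eq _ hF]
        refine setLIntegral_congr_fun measurableSet_Ioi fun s hs => lintegral_congr fun θ => ?_
        have hsq : (s * cos θ) ^ 2 + (s * sin θ) ^ 2 = s ^ 2 := by
          linear_combination s ^ 2 * sin_sq_add_cos_sq θ
        rw [hsq, sqrt_sq (le_of_lt hs), ← mul_assoc, ← ofReal_mul (le_of_lt hs)]
        ring_nf

theorem integral_comp_norm_euclideanSpace_fin_three (g : ℝ → ℝ) :
    ∫ x : EuclideanSpace ℝ (Fin 3), g ‖x‖ = 4 * π * ∫ r in Ioi 0, r ^ 2 * g r := by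
  rw [integral_fun_norm_addHaar, finrank_euclideanSpace_fin, measureReal_def,
    EuclideanSpace.volume_ball_fin_three, ← integral_const_mul]
  simp only [ofReal_one, one_pow, one_mul, smul_eq_mul, nsmul_eq_mul]
  rw [toReal_ofReal (by positivity), ← integral_const_mul, ← integral_const_mul]
  congr 1
  funext r
  push_cast
  ring

theorem sq_add_sq_sub_mul_cos_pos {r s : ℝ} (hr : 0 < r) (hs : 0 < s) (hrs : r ≠ s) (θ : ℝ) :
    0 < r ^ 2 + s ^ 2 - 2 * r * s * cos θ := by
  have : 0 < (r - s) ^ 2 := by positivity [sub_ne_zero.2 hrs]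
  nlinarith [cos_le_one θ, mul_pos hr hs]

theorem integral_sin_div_sqrt {r s : ℝ} (hr : 0 < r) (hs : 0 < s) (hrs : r ≠ s) :
    ∫ θ in 0..π, sin θ / √(r ^ 2 + s ^ 2 - 2 * r * s * cos θ) = 2 / max r s := by
  have hD := sq_add_sq_sub_mul_cos_pos hr hs hrs
  have hderiv : ∀ θ ∈ uIcc 0 π, HasDerivAt (fun θ => √(r ^ 2 + s ^ 2 - 2 * r * s * cos θ) / (r * s))
      (sin θ / √(r ^ 2 + s ^ 2 - 2 * r * s * cos θ)) θ := fun θ _ => by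
    have h := ((((hasDerivAt_cos θ).const_mul (2 * r * s)).const_sub (r ^ 2 + s ^ 2)).sqrt
      (hD θ).ne').div_const (r * s)
    refine h.congr_deriv ?_
    field_simp
  have hcont : Continuous fun θ => sin θ / √(r ^ 2 + s ^ 2 - 2 * r * s * cos θ) :=
    continuous_sin.div (by fun_prop) fun θ => (sqrt_pos.2 (hD θ)).ne'
  rw [intervalIntegral.integral_eq_sub_of_hasDerivAt hderiv (hcont.intervalIntegrable _ _)]
  simp only [cos_pi, cos_zero]
  rw [show r ^ 2 + s ^ 2 - 2 * r * s * -1 = (r + s) ^ 2 by ring,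
    show r ^ 2 + s ^ 2 - 2 * r * s * 1 = (r - s) ^ 2 by ring, sqrt_sq (by positivity),
    sqrt_sq_eq_abs]
  rcases le_total r s with h | h
  · rw [abs_of_nonpos (by linarith), max_eq_right h]
    field_simp
    ring
  · rw [abs_of_nonneg (by linarith), max_eq_left h]
    field_simp
    ring

theorem lintegral_sin_div_sqrt {r s : ℝ} (hr : 0 < r) (hs : 0 < s) (hrs : r ≠ s) :
    ∫⁻ θ in Ioo 0 π, ENNReal.ofReal (sin θ / √(r ^ 2 + s ^ 2 - 2 * r * s * cos θ)) =
      ENNReal.ofReal (2 / max r s) := by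
  have hD := sq_add_sq_sub_mul_cos_pos hr hs hrs
  have hcont : Continuous fun θ => sin θ / √(r ^ 2 + s ^ 2 - 2 * r * s * cos θ) :=
    continuous_sin.div (by fun_prop) fun θ => (sqrt_pos.2 (hD θ)).ne'
  rw [← ofReal_integral_eq_lintegral_ofReal (hcont.integrableOn_Icc.mono_set Ioo_subset_Icc_self),
    integral_Ioc_eq_integral_Ioo.symm.trans (intervalIntegral.integral_of_le pi_pos.le).symm,
    integral_sin_div_sqrt hr hs hrs]
  exact (ae_restrict_iff' measurableSet_Ioo).2 (ae_of_all _ fun θ hθ =>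
    div_nonneg (sin_nonneg_of_nonneg_of_le_pi hθ.1.le hθ.2.le) (sqrt_nonneg _))

theorem integral_comp_norm_div_norm_sub_of_norm_eq {E : Type*} [NormedAddCommGroup E]
    [InnerProductSpace ℝ E] [FiniteDimensional ℝ E] [MeasurableSpace E] [BorelSpace E]
    (f : ℝ → ℝ) {x x' : E} (h : ‖x‖ = ‖x'‖) :
    ∫ y, f ‖y‖ / ‖x - y‖ = ∫ y, f ‖y‖ / ‖x' - y‖ := by
  set Q := Submodule.reflection (ℝ ∙ (x - x'))ᗮ
  have hQx : Q x = x' := Submodule.reflection_sub h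
  rw [← Q.measurePreserving.integral_comp Q.toHomeomorph.measurableEmbedding
    (fun y => f ‖y‖ / ‖x' - y‖), ← hQx]
  simp only [← map_sub, LinearIsometryEquiv.norm_map]

theorem norm_smul_single_sub_eq_sqrt (r : ℝ) (y : EuclideanSpace ℝ (Fin 3)) :
    ‖r • EuclideanSpace.single 0 1 - y‖ = √(r ^ 2 + ‖y‖ ^ 2 - 2 * r * y 0) := by
  rw [← sqrt_sq (norm_nonneg _), norm_sub_sq_real, norm_smul, inner_smul_left,
    EuclideanSpace.inner_single_left]
  simp only [norm_eq_abs, PiLp.norm_single, norm_one, mul_one, sq_abs, ringHom_apply, one_mul]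
  ring_nf

theorem lintegral_comp_norm_div_norm_smul_single_sub (f : ℝ → ℝ) (hf : Measurable f)
    (hf0 : ∀ s, 0 ≤ f s) {r : ℝ} (hr : 0 < r) :
    ∫⁻ y : EuclideanSpace ℝ (Fin 3), ENNReal.ofReal (f ‖y‖ / ‖r • EuclideanSpace.single 0 1 - y‖) =
      ∫⁻ s in Ioi 0, ENNReal.ofReal (4 * π * (s ^ 2 * f s / max r s)) := by
  simp_rw [norm_smul_single_sub_eq_sqrt]
  rw [lintegral_euclideanSpace_fin_three
    (fun s t => ENNReal.ofReal (f s / √(r ^ 2 + s ^ 2 - 2 * r * t))) (by fun_prop),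
    ← lintegral_const_mul' _ _ ofReal_ne_top]
  refine lintegral_congr_ae ?_
  filter_upwards [ae_restrict_mem measurableSet_Ioi, ae_restrict_of_ae (Measure.ae_ne volume r)]
    with s (hs : 0 < s) hsr
  calc ENNReal.ofReal (2 * π) * ∫⁻ θ in Ioo 0 π, ENNReal.ofReal (s ^ 2 * sin θ) *
        ENNReal.ofReal (f s / √(r ^ 2 + s ^ 2 - 2 * r * (s * cos θ)))
      = ENNReal.ofReal (2 * π) * ∫⁻ θ in Ioo 0 π, ENNReal.ofReal (s ^ 2 * f s) *
        ENNReal.ofReal (sin θ / √(r ^ 2 + s ^ 2 - 2 * r * s * cos θ)) := by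
        congr 1
        refine setLIntegral_congr_fun measurableSet_Ioo fun θ hθ => ?_
        have hsin := sin_nonneg_of_nonneg_of_le_pi hθ.1.le hθ.2.le
        rw [← ofReal_mul (by positivity), ← ofReal_mul (by positivity [hf0 s])]
        ring_nf
    _ = ENNReal.ofReal (4 * π * (s ^ 2 * f s / max r s)) := by
        rw [lintegral_const_mul' _ _ ofReal_ne_top, lintegral_sin_div_sqrt hr hs (Ne.symm hsr),
          ← ofReal_mul (by positivity [hf0 s]), ← ofReal_mul (by positivity)]
        ring_nf

theorem integral_comp_norm_div_norm_sub (f : ℝ → ℝ) (hf : Measurable f) (hf0 : ∀ s, 0 ≤ f s)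
    (x : EuclideanSpace ℝ (Fin 3)) :
    ∫ y, f ‖y‖ / ‖x - y‖ = 4 * π * ∫ s in Ioi 0, s ^ 2 * f s / max ‖x‖ s := by
  rcases eq_or_ne x 0 with rfl | hx
  · simp only [zero_sub, norm_neg, norm_zero]
    rw [integral_comp_norm_euclideanSpace_fin_three (fun s => f s / s)]
    congr 1
    refine setIntegral_congr_fun measurableSet_Ioi fun s hs => ?_
    rw [max_eq_right (le_of_lt hs), mul_div_assoc]
  have hr : 0 < ‖x‖ := norm_pos_iff.2 hx
  rw [integral_comp_norm_div_norm_sub_of_norm_eq f (x' := ‖x‖ • EuclideanSpace.single 0 1)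
      (by simp [norm_smul]), ← integral_const_mul,
    integral_eq_lintegral_of_nonneg_ae (ae_of_all _ fun y => by positivity [hf0 ‖y‖])
      (by fun_prop : Measurable _).aestronglyMeasurable,
    integral_eq_lintegral_of_nonneg_ae (ae_of_all _ fun s => by positivity [hf0 s])
      (by fun_prop : Measurable _).aestronglyMeasurable,
    lintegral_comp_norm_div_norm_smul_single_sub f hf hf0 hr]

theorem HasCompactSupport.integrable_of_eq_zero {X E F : Type*} [TopologicalSpace X]
    [MeasurableSpace X] [OpensMeasurableSpace X] {μ : Measure X} [IsFiniteMeasureOnCompacts μ]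
    [NormedAddCommGroup E] [Zero F] {f : X → F} {g : X → E} (hfc : HasCompactSupport f)
    (hg : Continuous g) (hgf : ∀ x, f x = 0 → g x = 0) : Integrable g μ :=
  hg.integrable_of_hasCompactSupport (hfc.mono fun x hx hfx => hx (hgf x hfx))

theorem HasCompactSupport.eventually_eq_zero_atTop {α β : Type*} [TopologicalSpace α]
    [LinearOrder α] [ClosedIciTopology α] [NoMaxOrder α] [Zero β] {f : α → β}
    (hfc : HasCompactSupport f) : ∀ᶠ x in atTop, f x = 0 :=
  Eventually.mono (atTop_le_cocompact hfc.isCompact.compl_mem_cocompact) fun _ hx =>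
    image_eq_zero_of_notMem_tsupport hx

noncomputable def innerMass (f : ℝ → ℝ) (t : ℝ) : ℝ := ∫ s in 0..t, s ^ 2 * f s

noncomputable def outerPotential (f : ℝ → ℝ) (t : ℝ) : ℝ := ∫ s in Ioi t, s * f s

noncomputable def radialPotential (f : ℝ → ℝ) (r : ℝ) : ℝ :=
  4 * π * ∫ s in Ioi 0, s ^ 2 * f s / max r s

section RadialProfile

variable {f : ℝ → ℝ}

theorem innerMass_zero : innerMass f 0 = 0 := intervalIntegral.integral_same

theorem hasDerivAt_innerMass (hf : Continuous f) (t : ℝ) :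
    HasDerivAt (innerMass f) (t ^ 2 * f t) t :=
  ((continuous_pow 2).mul hf).integral_hasStrictDerivAt 0 t |>.hasDerivAt

theorem hasDerivAt_outerPotential (hf : Continuous f) (hfc : HasCompactSupport f) (t : ℝ) :
    HasDerivAt (outerPotential f) (-(t * f t)) t := by
  have hint : Integrable fun s => s * f s :=
    hfc.integrable_of_eq_zero (by fun_prop) fun s h => by simp [h]
  have h : outerPotential f = fun u => outerPotential f 0 - ∫ s in 0..u, s * f s := by
    funext u
    rw [outerPotential, outerPotential, ← intervalIntegral.integral_Ioi_sub_Ioi'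
      hint.integrableOn hint.integrableOn]
    ring
  rw [h]
  exact ((continuous_id.mul hf).integral_hasStrictDerivAt 0 t).hasDerivAt.const_sub _

theorem continuous_innerMass (hf : Continuous f) : Continuous (innerMass f) :=
  continuous_iff_continuousAt.2 fun t => (hasDerivAt_innerMass hf t).continuousAt

theorem continuous_outerPotential (hf : Continuous f) (hfc : HasCompactSupport f) :
    Continuous (outerPotential f) :=
  continuous_iff_continuousAt.2 fun t => (hasDerivAt_outerPotential hf hfc t).continuousAt

theorem outerPotential_eventually_eq_zero (hfc : HasCompactSupport f) :
    ∀ᶠ t in atTop, outerPotential f t = 0 := by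
  obtain ⟨R, hR⟩ := eventually_atTop.1 hfc.eventually_eq_zero_atTop
  filter_upwards [eventually_ge_atTop R] with t ht
  exact setIntegral_eq_zero_of_forall_eq_zero fun s hs => by
    rw [hR s (ht.trans (le_of_lt hs)), mul_zero]

theorem radialPotential_eq (hf : Continuous f) (hfc : HasCompactSupport f) {r : ℝ} (hr : 0 < r) :
    radialPotential f r = 4 * π * (innerMass f r / r + outerPotential f r) := by
  have hint : Integrable fun s => s ^ 2 * f s / max r s :=
    hfc.integrable_of_eq_zero (((continuous_pow 2).mul hf).div (by fun_prop)
      fun s => (lt_max_of_lt_left hr).ne') fun s h => by simp [h]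
  rw [radialPotential, ← intervalIntegral.integral_interval_add_Ioi (b := r) hint.integrableOn
    hint.integrableOn, innerMass, outerPotential, ← intervalIntegral.integral_div]
  congr 2
  · refine intervalIntegral.integral_congr fun s hs => ?_
    rw [uIcc_of_le hr.le] at hs
    simp only [max_eq_left hs.2]
  · refine setIntegral_congr_fun measurableSet_Ioi fun s (hs : r < s) => ?_
    have : s ≠ 0 := by linarith
    rw [max_eq_right hs.le]
    field_simp

theorem hasDerivAt_radialPotential (hf : Continuous f) (hfc : HasCompactSupport f) {r : ℝ}
    (hr : 0 < r) : HasDerivAt (radialPotential f) (-(4 * π) * innerMass f r / r ^ 2) r := by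
  have heq : radialPotential f =ᶠ[𝓝 r] fun t => 4 * π * (innerMass f t / t + outerPotential f t) :=
    eventually_of_mem (Ioi_mem_nhds hr) fun t ht => radialPotential_eq hf hfc ht
  refine HasDerivAt.congr_of_eventuallyEq ?_ heq
  have h := (((hasDerivAt_innerMass hf r).div (hasDerivAt_id r) hr.ne').add
    (hasDerivAt_outerPotential hf hfc r)).const_mul (4 * π)
  refine h.congr_deriv ?_
  simp only [id]
  field_simp
  ring

theorem integral_outerPotential_mul (hf : Continuous f) (hfc : HasCompactSupport f) :
    ∫ s in Ioi 0, s ^ 2 * outerPotential f s * f s = ∫ s in Ioi 0, s * innerMass f s * f s := by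
  have hm := continuous_innerMass hf
  have hw := continuous_outerPotential hf hfc
  have h1 : Integrable fun s => s ^ 2 * outerPotential f s * f s :=
    hfc.integrable_of_eq_zero (by fun_prop) fun s h => by simp [h]
  have h2 : Integrable fun s => s * innerMass f s * f s :=
    hfc.integrable_of_eq_zero (by fun_prop) fun s h => by simp [h]
  have hderiv : ∀ s ∈ Ioi (0 : ℝ), HasDerivAt (fun s => innerMass f s * outerPotential f s)
      (s ^ 2 * outerPotential f s * f s - s * innerMass f s * f s) s := fun s _ =>
    ((hasDerivAt_innerMass hf s).mul (hasDerivAt_outerPotential hf hfc s)).congr_deriv (by ring)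
  have hFTC := integral_Ioi_of_hasDerivAt_of_tendsto (m := 0) (hm.mul hw).continuousWithinAt
    hderiv (h1.sub h2).integrableOn
    (tendsto_const_nhds.congr'
      ((outerPotential_eventually_eq_zero hfc).mono fun s h => by simp [h]))
  rw [integral_sub h1.integrableOn h2.integrableOn, Pi.mul_apply, innerMass_zero, zero_mul,
    sub_zero, sub_eq_zero] at hFTC
  exact hFTC

theorem integral_sq_mul_radialPotential (hf : Continuous f) (hfc : HasCompactSupport f) :
    ∫ s in Ioi 0, s ^ 2 * (f s * radialPotential f s) =
      8 * π * ∫ s in Ioi 0, s * innerMass f s * f s := by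
  have hm := continuous_innerMass hf
  have hw := continuous_outerPotential hf hfc
  have h1 : Integrable fun s => 4 * π * (s * innerMass f s * f s) :=
    hfc.integrable_of_eq_zero (by fun_prop) fun s h => by simp [h]
  have h2 : Integrable fun s => 4 * π * (s ^ 2 * outerPotential f s * f s) :=
    hfc.integrable_of_eq_zero (by fun_prop) fun s h => by simp [h]
  calc ∫ s in Ioi 0, s ^ 2 * (f s * radialPotential f s)
      = ∫ s in Ioi 0, (4 * π * (s * innerMass f s * f s) +
          4 * π * (s ^ 2 * outerPotential f s * f s)) := by
        refine setIntegral_congr_fun measurableSet_Ioi fun s (hs : 0 < s) => ?_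
        rw [radialPotential_eq hf hfc hs]
        field_simp
    _ = _ := by
        rw [integral_add h1.integrableOn h2.integrableOn, integral_const_mul, integral_const_mul,
          integral_outerPotential_mul hf hfc]
        ring

theorem pohozaev_identity (hf : Continuous f) (hfc : HasCompactSupport f) {P : ℝ → ℝ}
    (hP : Continuous P) (hPc : HasCompactSupport P)
    (hP' : ∀ r > 0, HasDerivAt P (f r * (-(4 * π) * innerMass f r / r ^ 2)) r) :
    3 * ∫ s in Ioi 0, s ^ 2 * P s = 4 * π * ∫ s in Ioi 0, s * innerMass f s * f s := by
  have hm := continuous_innerMass hf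
  have h1 : Integrable fun s => 3 * (s ^ 2 * P s) :=
    hPc.integrable_of_eq_zero (by fun_prop) fun s h => by simp [h]
  have h2 : Integrable fun s => 4 * π * (s * innerMass f s * f s) :=
    hfc.integrable_of_eq_zero (by fun_prop) fun s h => by simp [h]
  have hderiv : ∀ s ∈ Ioi (0 : ℝ), HasDerivAt (fun s => s ^ 3 * P s)
      (3 * (s ^ 2 * P s) - 4 * π * (s * innerMass f s * f s)) s := fun s (hs : 0 < s) =>
    ((hasDerivAt_pow 3 s).mul (hP' s hs)).congr_deriv (by field_simp; ring)
  have hFTC := integral_Ioi_of_hasDerivAt_of_tendsto (m := 0)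
    (by fun_prop : Continuous _).continuousWithinAt
    hderiv (h1.sub h2).integrableOn
    (tendsto_const_nhds.congr' (hPc.eventually_eq_zero_atTop.mono fun s h => by simp [h]))
  rw [integral_sub h1.integrableOn h2.integrableOn, integral_const_mul, integral_const_mul,
    zero_pow three_ne_zero, zero_mul, sub_zero, sub_eq_zero] at hFTC
  exact hFTC

end RadialProfile

theorem hasDerivAt_max_zero_rpow {q : ℝ} (hq : 1 < q) (u : ℝ) :
    HasDerivAt (fun v => max v 0 ^ q) (q * max u 0 ^ (q - 1)) u := by
  have hcont : ∀ p : ℝ, 0 < p → Continuous fun v : ℝ => max v 0 ^ p := fun p hp =>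
    Continuous.rpow_const (f := fun v : ℝ => max v 0) (by fun_prop) fun _ => Or.inr hp.le
  refine hasDerivAt_of_hasDerivAt_of_ne' (g := fun v => q * max v 0 ^ (q - 1)) (x := 0)
    (fun v hv => ?_) (hcont q (by linarith)).continuousAt
    (continuous_const.mul (hcont (q - 1) (by linarith))).continuousAt u
  rcases hv.lt_or_gt with hv | hv
  · have h : (fun v => max v 0 ^ q) =ᶠ[𝓝 v] fun _ => 0 :=
      eventually_of_mem (Iio_mem_nhds hv) fun w (hw : w < 0) => by
        simp only [max_eq_right hw.le, zero_rpow (by linarith : q ≠ 0)]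
    rw [h.hasDerivAt_iff, max_eq_right hv.le, zero_rpow (by linarith), mul_zero]
    exact hasDerivAt_const _ _
  · have h : (fun v => max v 0 ^ q) =ᶠ[𝓝 v] fun w => w ^ q :=
      eventually_of_mem (Ioi_mem_nhds hv) fun w (hw : 0 < w) => by simp only [max_eq_left hw.le]
    rw [h.hasDerivAt_iff, max_eq_left hv.le]
    exact hasDerivAt_rpow_const (Or.inl hv.ne')

theorem hasDerivAt_mul_rpow_of_eq_max {K γ lam : ℝ} (hK : 0 < K) (hγ : 1 < γ) {f V : ℝ → ℝ}
    {r V' : ℝ} (hV : HasDerivAt V V' r)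
    (hf : ∀ᶠ s in 𝓝 r, 0 ≤ f s ∧ K * γ / (γ - 1) * f s ^ (γ - 1) = max (V s + lam) 0) :
    HasDerivAt (fun s => K * f s ^ γ) (f r * V') r := by
  have hγ1 : γ - 1 ≠ 0 := (sub_pos.2 hγ).ne'
  set κ := K * γ / (γ - 1)
  have hκ : 0 < κ := div_pos (by nlinarith) (by linarith)
  set u := fun s => (V s + lam) / κ
  have hprofile : ∀ s, 0 ≤ f s → κ * f s ^ (γ - 1) = max (V s + lam) 0 →
      f s = max (u s) 0 ^ (γ - 1)⁻¹ := fun s h0 hs => by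
    rw [show max (u s) 0 = f s ^ (γ - 1) by
      rw [← zero_div κ, max_div_div_right hκ.le, ← hs, mul_div_cancel_left₀ _ hκ.ne'],
      rpow_rpow_inv h0 hγ1]
  have hq : 1 < (γ - 1)⁻¹ * γ := by
    rw [inv_mul_eq_div, one_lt_div (by linarith)]
    linarith
  have heq : (fun s => K * f s ^ γ) =ᶠ[𝓝 r] fun s => K * max (u s) 0 ^ ((γ - 1)⁻¹ * γ) := by
    filter_upwards [hf] with s ⟨h0, hs⟩
    rw [hprofile s h0 hs, ← rpow_mul (le_max_right _ _)]
  have h := ((hasDerivAt_max_zero_rpow hq (u r)).comp r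
    ((hV.add_const lam).div_const κ)).const_mul K
  refine (h.congr_of_eventuallyEq heq).congr_deriv ?_
  rw [show (γ - 1)⁻¹ * γ - 1 = (γ - 1)⁻¹ by field_simp; ring,
    ← hprofile r hf.self_of_nhds.1 hf.self_of_nhds.2]
  simp only [κ]
  field_simp

theorem integral_sq_mul_radialPotential_eq_of_eq_max {K γ lam : ℝ} (hK : 0 < K) (hγ : 1 < γ)
    {f : ℝ → ℝ} (hf : Continuous f) (hf0 : ∀ s, 0 ≤ f s) (hfc : HasCompactSupport f)
    (hEL : ∀ r > 0, K * γ / (γ - 1) * f r ^ (γ - 1) = max (radialPotential f r + lam) 0) :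
    ∫ s in Ioi 0, s ^ 2 * (f s * radialPotential f s) =
      (6 * γ - 6) * ∫ s in Ioi 0, s ^ 2 * (K / (γ - 1) * f s ^ γ) := by
  have hP : ∀ r > 0, HasDerivAt (fun s => K * f s ^ γ)
      (f r * (-(4 * π) * innerMass f r / r ^ 2)) r := fun r hr =>
    hasDerivAt_mul_rpow_of_eq_max hK hγ (hasDerivAt_radialPotential hf hfc hr)
      (eventually_of_mem (Ioi_mem_nhds hr) fun s hs => ⟨hf0 s, hEL s hs⟩)
  have hPoh := pohozaev_identity hf hfc (P := fun s => K * f s ^ γ)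
    (continuous_const.mul (hf.rpow_const fun _ => Or.inr (by linarith)))
    (hfc.comp_left (g := fun u => K * u ^ γ) (by simp [zero_rpow (by linarith : γ ≠ 0)])) hP
  have hγ1 : γ - 1 ≠ 0 := (sub_pos.2 hγ).ne'
  have hA : (γ - 1) * ∫ s in Ioi 0, s ^ 2 * (K / (γ - 1) * f s ^ γ) =
      ∫ s in Ioi 0, s ^ 2 * (K * f s ^ γ) := by
    rw [← integral_const_mul]
    congr 1
    funext s
    field_simp
  rw [integral_sq_mul_radialPotential hf hfc]
  linear_combination (-2) * hPoh - 6 * hA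

theorem stmt11_general
    (K γ lam : ℝ) (hK : 0 < K) (hγ : 4/3 < γ)
    (σ : EuclideanSpace ℝ (Fin 3) → ℝ) (σrad : ℝ → ℝ)
    (hrad : ∀ x, σ x = σrad ‖x‖)
    (hcont : Continuous σ)
    (hnn : ∀ x, 0 ≤ σ x)
    (hcs : HasCompactSupport σ)
    (hEL : ∀ x, (K * γ / (γ - 1)) * σ x ^ (γ - 1) =
      max ((∫ y, σ y / ‖x - y‖) + lam) 0) :
    (∫ x, (K / (γ - 1)) * σ x ^ γ) -
        (1/2) * (∫ x, σ x * ∫ y, σ y / ‖x - y‖) =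
      (4 - 3 * γ) * ∫ x, (K / (γ - 1)) * σ x ^ γ ∧
    (∫ x, σ x * ∫ y, σ y / ‖x - y‖) =
      (6 * γ - 6) * ∫ x, (K / (γ - 1)) * σ x ^ γ := by
  have hγ1 : 1 < γ := by linarith
  set e : EuclideanSpace ℝ (Fin 3) := EuclideanSpace.single 0 1
  have he : ‖e‖ = 1 := by simp [e]
  set f : ℝ → ℝ := fun s => σ (s • e)
  have hσf : ∀ x, σ x = f ‖x‖ := fun x => by
    simp only [f, hrad x, hrad (‖x‖ • e), norm_smul, he, mul_one, norm_norm]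
  have hfc : HasCompactSupport f :=
    hcs.comp_isClosedEmbedding (LinearIsometry.toSpanSingleton ℝ _ he).isometry.isClosedEmbedding
  have hV : ∀ x, ∫ y, σ y / ‖x - y‖ = radialPotential f ‖x‖ := fun x => by
    simp_rw [hσf]
    exact integral_comp_norm_div_norm_sub f (by fun_prop) (fun s => hnn _) x
  have hvirial := integral_sq_mul_radialPotential_eq_of_eq_max (lam := lam) hK hγ1
    (by fun_prop) (fun s => hnn _) hfc fun r hr => by
      have h := hEL (r • e)
      rwa [hV, norm_smul, he, mul_one, norm_of_nonneg hr.le] at h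
  have hG : ∫ x, σ x * ∫ y, σ y / ‖x - y‖ = (6 * γ - 6) * ∫ x, K / (γ - 1) * σ x ^ γ := by
    simp_rw [hV, hσf]
    rw [integral_comp_norm_euclideanSpace_fin_three (fun s => f s * radialPotential f s),
      integral_comp_norm_euclideanSpace_fin_three (fun s => K / (γ - 1) * f s ^ γ), hvirial]
    ring
  exact ⟨by rw [hG]; ring, hG⟩

theorem stmt11
    (K γ lam : ℝ) (hK : 0 < K) (hγ : 4/3 < γ) (hlam : lam < 0)
    (σ : EuclideanSpace ℝ (Fin 3) → ℝ) (σrad : ℝ → ℝ)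
    (hrad : ∀ x, σ x = σrad ‖x‖)
    (hcont : Continuous σ)
    (hnn : ∀ x, 0 ≤ σ x)
    (hcs : HasCompactSupport σ)
    (hEL : ∀ x, (K * γ / (γ - 1)) * σ x ^ (γ - 1) =
      max ((∫ y, σ y / ‖x - y‖) + lam) 0) :
    (∫ x, (K / (γ - 1)) * σ x ^ γ) -
        (1/2) * (∫ x, σ x * ∫ y, σ y / ‖x - y‖) =
      (4 - 3 * γ) * ∫ x, (K / (γ - 1)) * σ x ^ γ ∧
    (∫ x, σ x * ∫ y, σ y / ‖x - y‖) =
      (6 * γ - 6) * ∫ x, (K / (γ - 1)) * σ x ^ γ :=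
  stmt11_general K γ lam hK hγ σ σrad hrad hcont hnn hcs hEL
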